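/- In ℍ with metric ds² = 4dξ² + ξ⁶dθ², for any two points p = (θ₀,ξ₀), q = (θ₁,ξ₁) with θ₀ ≠ θ₁, the distance satisfies d(p,q) < 2ξ₀ + 2ξ₁, and if θ₀ = θ₁ then d(p,q) = 2|ξ₁ - ξ₀|. -/

import Mathlib

/-!
Every path has length at least `2|ξ₁ - ξ₀|` since the metric dominates `4 dξ²`, and the vertical
segment attains this. For `θ₀ ≠ θ₁`, descend from `ξ₀` to a small height `m`, move horizontally and
climb back to `ξ₁`: the vertical legs cost about `2(ξ₀ - m) + 2(ξ₁ - m)`, while horizontal motion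
is cheap near `ξ = 0`, where the metric degenerates like `ξ³ dθ`. To keep the path `C¹`, the height
is the profile `m + a (1 - t)^N + b t^N` with `N` large, and `θ` is chosen so that `ξ³ θ' ≡ c`.
Then `|c| = |θ₁ - θ₀| / ∫ ξ⁻³ ≤ 16 m³ |θ₁ - θ₀|`, which is below the saving `4m` once `m` is small.
-/

open Set Filter

/-- Length of a smooth path `x ↦ (θ(x), ξ(x))` in the upper half-plane model
`ℍ = {(θ,ξ) : ξ > 0}` with metric `ds² = 4dξ² + ξ⁶dθ²`. -/
noncomputable def Hlen (γ : ℝ → ℝ × ℝ) (a b : ℝ) : ℝ :=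
  ∫ x in a..b,
    Real.sqrt (4 * (deriv (fun t => (γ t).2) x) ^ 2 +
      ((γ x).2) ^ 6 * (deriv (fun t => (γ t).1) x) ^ 2)

/-- The length-metric distance in `ℍ`: infimum of lengths of `C¹` paths staying in `ξ > 0`. -/
noncomputable def Hdist (p q : ℝ × ℝ) : ℝ :=
  sInf { L : ℝ | ∃ γ : ℝ → ℝ × ℝ, ContDiff ℝ 1 γ ∧ γ 0 = p ∧ γ 1 = q ∧
    (∀ t ∈ Set.Icc (0:ℝ) 1, 0 < (γ t).2) ∧ L = Hlen γ 0 1 }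

lemma hlen_nonneg (γ : ℝ → ℝ × ℝ) : 0 ≤ Hlen γ 0 1 :=
  intervalIntegral.integral_nonneg zero_le_one fun _ _ => Real.sqrt_nonneg _

lemma Real.sqrt_sq_add_sq_le (x y : ℝ) : √(x ^ 2 + y ^ 2) ≤ |x| + |y| := by
  rw [Real.sqrt_le_left (by positivity)]
  nlinarith [sq_abs x, sq_abs y, mul_nonneg (abs_nonneg x) (abs_nonneg y)]

section C1Path

variable {γ : ℝ → ℝ × ℝ} (hγ : ContDiff ℝ 1 γ)
include hγ

lemma continuous_deriv_snd : Continuous (deriv fun t => (γ t).2) :=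
  (contDiff_snd.comp hγ).continuous_deriv le_rfl

lemma continuous_deriv_fst : Continuous (deriv fun t => (γ t).1) :=
  (contDiff_fst.comp hγ).continuous_deriv le_rfl

lemma continuous_hlen_integrand :
    Continuous fun x => √(4 * deriv (fun t => (γ t).2) x ^ 2 +
      (γ x).2 ^ 6 * deriv (fun t => (γ t).1) x ^ 2) := by
  have := continuous_deriv_snd hγ
  have := continuous_deriv_fst hγ
  have := hγ.continuous.snd
  fun_prop

lemma two_mul_abs_sub_le_hlen : 2 * |(γ 1).2 - (γ 0).2| ≤ Hlen γ 0 1 := by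
  have hξ' := continuous_deriv_snd hγ
  have hftc : ∫ x in (0:ℝ)..1, deriv (fun t => (γ t).2) x = (γ 1).2 - (γ 0).2 :=
    intervalIntegral.integral_deriv_eq_sub
      (fun x _ => ((contDiff_snd.comp hγ).differentiable one_ne_zero) x)
      (hξ'.intervalIntegrable 0 1)
  calc 2 * |(γ 1).2 - (γ 0).2|
      = |∫ x in (0:ℝ)..1, 2 * deriv (fun t => (γ t).2) x| := by
        rw [intervalIntegral.integral_const_mul, hftc, abs_mul, abs_two]
    _ ≤ ∫ x in (0:ℝ)..1, |2 * deriv (fun t => (γ t).2) x| :=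
        intervalIntegral.abs_integral_le_integral_abs zero_le_one
    _ ≤ Hlen γ 0 1 := by
        refine intervalIntegral.integral_mono_on zero_le_one
          ((continuous_const.mul hξ').abs.intervalIntegrable 0 1)
          ((continuous_hlen_integrand hγ).intervalIntegrable 0 1) fun x _ => ?_
        rw [← Real.sqrt_sq_eq_abs]
        gcongr
        nlinarith [sq_nonneg ((γ x).2 ^ 3 * deriv (fun t => (γ t).1) x)]

lemma hlen_le : Hlen γ 0 1 ≤ 2 * (∫ x in (0:ℝ)..1, |deriv (fun t => (γ t).2) x|) +
    ∫ x in (0:ℝ)..1, |(γ x).2 ^ 3 * deriv (fun t => (γ t).1) x| := by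
  have hξ' := continuous_deriv_snd hγ
  have hθ' := continuous_deriv_fst hγ
  have hξ := hγ.continuous.snd
  calc Hlen γ 0 1 ≤ ∫ x in (0:ℝ)..1, (2 * |deriv (fun t => (γ t).2) x| +
        |(γ x).2 ^ 3 * deriv (fun t => (γ t).1) x|) := by
        refine intervalIntegral.integral_mono_on zero_le_one
          ((continuous_hlen_integrand hγ).intervalIntegrable 0 1)
          (Continuous.intervalIntegrable (by fun_prop) 0 1) fun x _ => ?_
        calc _ = √((2 * deriv (fun t => (γ t).2) x) ^ 2 +
              ((γ x).2 ^ 3 * deriv (fun t => (γ t).1) x) ^ 2) := by ring_nf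
          _ ≤ _ := by
              rw [← abs_two, ← abs_mul, abs_two]
              exact Real.sqrt_sq_add_sq_le _ _
    _ = _ := by
        rw [intervalIntegral.integral_add (Continuous.intervalIntegrable (by fun_prop) 0 1)
          (Continuous.intervalIntegrable (by fun_prop) 0 1),
          intervalIntegral.integral_const_mul]

end C1Path

lemma hdist_le_hlen {p q : ℝ × ℝ} {γ : ℝ → ℝ × ℝ} (hγ : ContDiff ℝ 1 γ) (h0 : γ 0 = p)
    (h1 : γ 1 = q) (hpos : ∀ t ∈ Icc (0:ℝ) 1, 0 < (γ t).2) : Hdist p q ≤ Hlen γ 0 1 :=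
  csInf_le ⟨0, by rintro _ ⟨δ, -, -, -, -, rfl⟩; exact hlen_nonneg δ⟩ ⟨γ, hγ, h0, h1, hpos, rfl⟩

lemma two_mul_abs_sub_le_hdist {p q : ℝ × ℝ} {γ : ℝ → ℝ × ℝ} (hγ : ContDiff ℝ 1 γ)
    (h0 : γ 0 = p) (h1 : γ 1 = q) (hpos : ∀ t ∈ Icc (0:ℝ) 1, 0 < (γ t).2) :
    2 * |q.2 - p.2| ≤ Hdist p q := by
  refine le_csInf ⟨_, γ, hγ, h0, h1, hpos, rfl⟩ ?_
  rintro _ ⟨δ, hδ, rfl, rfl, -, rfl⟩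
  exact two_mul_abs_sub_le_hlen hδ

lemma hlen_vertical_le (θ₀ ξ₀ ξ₁ : ℝ) :
    Hlen (fun t => (θ₀, ξ₀ + t * (ξ₁ - ξ₀))) 0 1 ≤ 2 * |ξ₁ - ξ₀| :=
  (hlen_le (by fun_prop)).trans_eq (by simp)

noncomputable def constMomentumPath (θ₀ c : ℝ) (ξ : ℝ → ℝ) (t : ℝ) : ℝ × ℝ :=
  (θ₀ + c * ∫ s in (0:ℝ)..t, (ξ s ^ 3)⁻¹, ξ t)

section ConstMomentumPath

variable (θ₀ c : ℝ) {ξ : ℝ → ℝ} (hξ : ContDiff ℝ 1 ξ) (hpos : ∀ t, 0 < ξ t)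
include hξ hpos

lemma hasDerivAt_constMomentumPath_fst (t : ℝ) :
    HasDerivAt (fun t => (constMomentumPath θ₀ c ξ t).1) (c * (ξ t ^ 3)⁻¹) t :=
  (((hξ.continuous.pow 3).inv₀ fun s => (pow_pos (hpos s) 3).ne').integral_hasStrictDerivAt 0 t
    |>.hasDerivAt.const_mul c).const_add θ₀

lemma contDiff_constMomentumPath : ContDiff ℝ 1 (constMomentumPath θ₀ c ξ) := by
  have hθ : ContDiff ℝ 1 fun t => (constMomentumPath θ₀ c ξ t).1 := by
    rw [contDiff_one_iff_deriv]
    refine ⟨fun t => (hasDerivAt_constMomentumPath_fst θ₀ c hξ hpos t).differentiableAt, ?_⟩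
    rw [funext fun t => (hasDerivAt_constMomentumPath_fst θ₀ c hξ hpos t).deriv]
    exact continuous_const.mul ((hξ.continuous.pow 3).inv₀ fun s => (pow_pos (hpos s) 3).ne')
  exact hθ.prodMk hξ

lemma hlen_constMomentumPath_le :
    Hlen (constMomentumPath θ₀ c ξ) 0 1 ≤ 2 * (∫ t in (0:ℝ)..1, |deriv ξ t|) + |c| := by
  refine (hlen_le (contDiff_constMomentumPath θ₀ c hξ hpos)).trans_eq ?_
  have hmomentum (t : ℝ) : (constMomentumPath θ₀ c ξ t).2 ^ 3 *
      deriv (fun t => (constMomentumPath θ₀ c ξ t).1) t = c := by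
    rw [(hasDerivAt_constMomentumPath_fst θ₀ c hξ hpos t).deriv]
    simp only [constMomentumPath]
    field_simp [(hpos t).ne']
  simp only [hmomentum]
  simp [constMomentumPath]

end ConstMomentumPath

noncomputable def dipProfile (m a b : ℝ) (N : ℕ) (t : ℝ) : ℝ :=
  m + a * (1 - t) ^ N + b * t ^ N

section DipProfile

variable {m a b : ℝ} {N : ℕ}

lemma hasDerivAt_dipProfile (t : ℝ) : HasDerivAt (dipProfile m a b N)
    (N * b * t ^ (N - 1) - N * a * (1 - t) ^ (N - 1)) t := by
  have h₁ : HasDerivAt (fun t : ℝ => (1 - t) ^ N) (N * (1 - t) ^ (N - 1) * (-1)) t :=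
    ((hasDerivAt_id t).const_sub 1).pow N
  have h₂ : HasDerivAt (fun t : ℝ => t ^ N) (N * t ^ (N - 1)) t := hasDerivAt_pow N t
  exact (((h₁.const_mul a).const_add m).add (h₂.const_mul b)).congr_deriv (by ring)

lemma dipProfile_zero (hN : N ≠ 0) : dipProfile m a b N 0 = m + a := by
  simp [dipProfile, hN]

lemma dipProfile_one (hN : N ≠ 0) : dipProfile m a b N 1 = m + b := by
  simp [dipProfile, hN]

lemma contDiff_dipProfile : ContDiff ℝ 1 (dipProfile m a b N) := by
  unfold dipProfile
  fun_prop

lemma dipProfile_pos (hm : 0 < m) (ha : 0 ≤ a) (hb : 0 ≤ b) (hN : Even N) (t : ℝ) :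
    0 < dipProfile m a b N t := by
  have := mul_nonneg ha (hN.pow_nonneg (1 - t))
  have := mul_nonneg hb (hN.pow_nonneg t)
  unfold dipProfile
  linarith

lemma integral_abs_deriv_dipProfile_le (ha : 0 ≤ a) (hb : 0 ≤ b) (hN : N ≠ 0) :
    ∫ t in (0:ℝ)..1, |deriv (dipProfile m a b N) t| ≤ a + b := by
  set g : ℝ → ℝ := fun t => N * a * (1 - t) ^ (N - 1) + N * b * t ^ (N - 1)
  have hg : Continuous g := by fun_prop
  have hG (t : ℝ) : HasDerivAt (fun t => b * t ^ N - a * (1 - t) ^ N) (g t) t := by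
    have h₁ : HasDerivAt (fun t : ℝ => (1 - t) ^ N) (N * (1 - t) ^ (N - 1) * (-1)) t :=
      ((hasDerivAt_id t).const_sub 1).pow N
    exact (((hasDerivAt_pow N t).const_mul b).sub (h₁.const_mul a)).congr_deriv (by ring)
  calc ∫ t in (0:ℝ)..1, |deriv (dipProfile m a b N) t| ≤ ∫ t in (0:ℝ)..1, g t := by
        refine intervalIntegral.integral_mono_on zero_le_one
          ((contDiff_dipProfile.continuous_deriv le_rfl).abs.intervalIntegrable 0 1)
          (hg.intervalIntegrable 0 1) fun t ⟨ht₀, ht₁⟩ => ?_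
        rw [(hasDerivAt_dipProfile t).deriv, abs_le]
        have : 0 ≤ (N : ℝ) * a * (1 - t) ^ (N - 1) := by have := sub_nonneg.2 ht₁; positivity
        have : 0 ≤ (N : ℝ) * b * t ^ (N - 1) := by positivity
        constructor <;> linarith
    _ = a + b := by
        rw [intervalIntegral.integral_eq_sub_of_hasDerivAt (fun t _ => hG t)
          (hg.intervalIntegrable 0 1)]
        simp [hN, add_comm]

lemma dipProfile_le_two_mul (ha : 0 ≤ a) (hb : 0 ≤ b) (hN : (a + b) * (3 / 4) ^ N ≤ m) {t : ℝ}
    (ht : t ∈ Icc (1 / 4 : ℝ) (3 / 4)) : dipProfile m a b N t ≤ 2 * m := by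
  obtain ⟨ht₀, ht₁⟩ := ht
  have h₀ : (1 - t) ^ N ≤ (3 / 4) ^ N := pow_le_pow_left₀ (by linarith) (by linarith) N
  have h₁ : t ^ N ≤ (3 / 4) ^ N := pow_le_pow_left₀ (by linarith) ht₁ N
  have := mul_le_mul_of_nonneg_left h₀ ha
  have := mul_le_mul_of_nonneg_left h₁ hb
  unfold dipProfile
  nlinarith

lemma one_div_le_integral_inv_pow_dipProfile (hm : 0 < m) (ha : 0 ≤ a) (hb : 0 ≤ b)
    (hNe : Even N) (hN : (a + b) * (3 / 4) ^ N ≤ m) :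
    1 / (16 * m ^ 3) ≤ ∫ t in (0:ℝ)..1, (dipProfile m a b N t ^ 3)⁻¹ := by
  have hpos := dipProfile_pos hm ha hb hNe
  have hint : Continuous fun t => (dipProfile m a b N t ^ 3)⁻¹ :=
    (contDiff_dipProfile.continuous.pow 3).inv₀ fun t => (pow_pos (hpos t) 3).ne'
  calc 1 / (16 * m ^ 3) = ∫ _ in (1 / 4 : ℝ)..(3 / 4), ((2 * m) ^ 3)⁻¹ := by
        rw [intervalIntegral.integral_const, smul_eq_mul]
        field_simp
        ring
    _ ≤ ∫ t in (1 / 4 : ℝ)..(3 / 4), (dipProfile m a b N t ^ 3)⁻¹ := by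
        refine intervalIntegral.integral_mono_on (by norm_num) intervalIntegrable_const
          (hint.intervalIntegrable _ _) fun t ht => ?_
        exact inv_anti₀ (pow_pos (hpos t) 3)
          (pow_le_pow_left₀ (hpos t).le (dipProfile_le_two_mul ha hb hN ht) 3)
    _ ≤ ∫ t in (0:ℝ)..1, (dipProfile m a b N t ^ 3)⁻¹ :=
        intervalIntegral.integral_mono_interval (by norm_num) (by norm_num) (by norm_num)
          (Eventually.of_forall fun t => (inv_pos.2 (pow_pos (hpos t) 3)).le)
          (hint.intervalIntegrable _ _)

end DipProfile

lemma exists_dip {ξ₀ ξ₁ m : ℝ} (hm : 0 < m) (hm₀ : m ≤ ξ₀) (hm₁ : m ≤ ξ₁) :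
    ∃ ξ : ℝ → ℝ, ContDiff ℝ 1 ξ ∧ (∀ t, 0 < ξ t) ∧ ξ 0 = ξ₀ ∧ ξ 1 = ξ₁ ∧
      ∫ t in (0:ℝ)..1, |deriv ξ t| ≤ ξ₀ + ξ₁ - 2 * m ∧
      1 / (16 * m ^ 3) ≤ ∫ t in (0:ℝ)..1, (ξ t ^ 3)⁻¹ := by
  have ha : 0 ≤ ξ₀ - m := sub_nonneg.2 hm₀
  have hb : 0 ≤ ξ₁ - m := sub_nonneg.2 hm₁
  have hlim :
      Tendsto (fun n : ℕ => (ξ₀ - m + (ξ₁ - m)) * (3 / 4 : ℝ) ^ (2 * n)) atTop (nhds 0) := by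
    simp_rw [pow_mul]
    simpa using (tendsto_pow_atTop_nhds_zero_of_lt_one (r := (3 / 4 : ℝ) ^ 2) (by positivity)
      (by norm_num)).const_mul _
  obtain ⟨n, hn, hn₁⟩ := ((hlim.eventually (ge_mem_nhds hm)).and (eventually_ge_atTop 1)).exists
  refine ⟨dipProfile m (ξ₀ - m) (ξ₁ - m) (2 * n), contDiff_dipProfile,
    dipProfile_pos hm ha hb (even_two_mul n), ?_, ?_,
    ?_, one_div_le_integral_inv_pow_dipProfile hm ha hb (even_two_mul n) hn⟩
  · rw [dipProfile_zero (by omega)]; ring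
  · rw [dipProfile_one (by omega)]; ring
  · linarith [integral_abs_deriv_dipProfile_le (m := m) ha hb (by omega : 2 * n ≠ 0)]

lemma exists_path_hlen_lt (θ₀ θ₁ : ℝ) {ξ₀ ξ₁ : ℝ} (h₀ : 0 < ξ₀) (h₁ : 0 < ξ₁) :
    ∃ γ : ℝ → ℝ × ℝ, ContDiff ℝ 1 γ ∧ γ 0 = (θ₀, ξ₀) ∧ γ 1 = (θ₁, ξ₁) ∧
      (∀ t ∈ Icc (0:ℝ) 1, 0 < (γ t).2) ∧ Hlen γ 0 1 < 2 * ξ₀ + 2 * ξ₁ := by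
  have hsmall : Tendsto (fun m : ℝ => 4 * |θ₁ - θ₀| * m ^ 2) (nhds 0) (nhds 0) :=
    (show Continuous fun m : ℝ => 4 * |θ₁ - θ₀| * m ^ 2 by fun_prop).tendsto' 0 0 (by simp)
  obtain ⟨m, ⟨hm₀, hm₁, hmΔ⟩, hm⟩ :
      ∃ m : ℝ, (m ≤ ξ₀ ∧ m ≤ ξ₁ ∧ 4 * |θ₁ - θ₀| * m ^ 2 < 1) ∧ 0 < m :=
    (((eventually_le_nhds h₀).and ((eventually_le_nhds h₁).and
      (hsmall.eventually (gt_mem_nhds one_pos)))).filter_mono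
      (nhdsWithin_le_nhds (s := Ioi 0))).and self_mem_nhdsWithin |>.exists
  obtain ⟨ξ, hξ, hpos, hξ0, hξ1, hvert, hI⟩ := exists_dip hm hm₀ hm₁
  set I := ∫ t in (0:ℝ)..1, (ξ t ^ 3)⁻¹
  have hI0 : 0 < I := lt_of_lt_of_le (by positivity) hI
  have hc : |(θ₁ - θ₀) / I| < 4 * m := by
    have : 1 ≤ 16 * m ^ 3 * I := by
      rw [one_div, inv_le_iff_one_le_mul₀ (by positivity)] at hI
      linarith
    calc |(θ₁ - θ₀) / I| = |θ₁ - θ₀| / I := by rw [abs_div, abs_of_pos hI0]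
      _ ≤ |θ₁ - θ₀| * (16 * m ^ 3) := by
        rw [div_le_iff₀ hI0]; nlinarith [abs_nonneg (θ₁ - θ₀)]
      _ < 4 * m := by nlinarith
  refine ⟨constMomentumPath θ₀ ((θ₁ - θ₀) / I) ξ, contDiff_constMomentumPath _ _ hξ hpos,
    by simp [constMomentumPath, hξ0], by simp [constMomentumPath, hξ1, I, hI0.ne'],
    fun t _ => hpos t, ?_⟩
  calc Hlen (constMomentumPath θ₀ ((θ₁ - θ₀) / I) ξ) 0 1
      ≤ 2 * (∫ t in (0:ℝ)..1, |deriv ξ t|) + |(θ₁ - θ₀) / I| :=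
        hlen_constMomentumPath_le _ _ hξ hpos
    _ < 2 * ξ₀ + 2 * ξ₁ := by linarith

/-- If `θ₀ ≠ θ₁` the distance is strictly less than `2ξ₀ + 2ξ₁`;
if `θ₀ = θ₁` it equals `2|ξ₁ - ξ₀|`. -/
theorem stmt2 (θ₀ ξ₀ θ₁ ξ₁ : ℝ) (h₀ : 0 < ξ₀) (h₁ : 0 < ξ₁) :
    (θ₀ ≠ θ₁ → Hdist (θ₀, ξ₀) (θ₁, ξ₁) < 2 * ξ₀ + 2 * ξ₁) ∧
    (θ₀ = θ₁ → Hdist (θ₀, ξ₀) (θ₁, ξ₁) = 2 * |ξ₁ - ξ₀|) := by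
  constructor
  · intro _
    obtain ⟨γ, hγ, h0, h1, hpos, hlt⟩ := exists_path_hlen_lt θ₀ θ₁ h₀ h₁
    exact (hdist_le_hlen hγ h0 h1 hpos).trans_lt hlt
  · rintro rfl
    have hγ : ContDiff ℝ 1 fun t : ℝ => (θ₀, ξ₀ + t * (ξ₁ - ξ₀)) := by fun_prop
    have hpos : ∀ t ∈ Icc (0:ℝ) 1, 0 < ξ₀ + t * (ξ₁ - ξ₀) := fun t ⟨ht₀, ht₁⟩ => by
      nlinarith [mul_nonneg ht₀ h₁.le, mul_nonneg (sub_nonneg.2 ht₁) h₀.le]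
    refine le_antisymm
      ((hdist_le_hlen hγ ?_ ?_ hpos).trans (hlen_vertical_le θ₀ ξ₀ ξ₁))
      (two_mul_abs_sub_le_hdist (p := (θ₀, ξ₀)) (q := (θ₀, ξ₁)) hγ ?_ ?_ hpos) <;> simp
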